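/- (Linear convergence of RACER.) Suppose 0 ≤ c(z,a) ≤ M and 0 ≤ w2(z) ≤ K for all z ∈ Z, a ∈ {0,1}, with M, K > 0. Let λ* be the unique minimizer of the dual function d over [0, ∞), let π* = π_{λ*}, fix λ_0 ≥ 0, and define the primal–dual iterates by λ_{t+1} = max(0, λ_t + η ( ∑_z ρ(z) ∑_a π_{λ_t}(a|z) w2(z) c(z,a) − C − β λ_t )) with step size η = 2β/(M²K² + 2β²), and π_t = π_{λ_t}. Then for every t ≥ 0, ∑_z ρ(z) · KL( π_t(·|z) ‖ π*(·|z) ) ≤ (M²K²/(2β²)) · ( M²K²/(M²K² + 2β²) )^{2t} · (λ_0 − λ*)². -/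

import Mathlib

open Finset

/-- `q_λ(z,a) = w1(z) r(z,a) − λ w2(z) c(z,a)`. -/
noncomputable def qfun {Z : Type*} (r c : Z → Bool → ℝ) (w1 w2 : Z → ℝ)
    (lam : ℝ) (z : Z) (a : Bool) : ℝ :=
  w1 z * r z a - lam * (w2 z * c z a)

/-- Partition function `Q(z,λ) = ∑_a exp(q_λ(z,a)/β)`. -/
noncomputable def Qpart {Z : Type*} (r c : Z → Bool → ℝ) (w1 w2 : Z → ℝ)
    (β lam : ℝ) (z : Z) : ℝ :=
  ∑ a, Real.exp (qfun r c w1 w2 lam z a / β)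

/-- Gibbs policy `π_λ(a|z) = exp(q_λ(z,a)/β) / Q(z,λ)`. -/
noncomputable def gibbs {Z : Type*} (r c : Z → Bool → ℝ) (w1 w2 : Z → ℝ)
    (β lam : ℝ) (z : Z) (a : Bool) : ℝ :=
  Real.exp (qfun r c w1 w2 lam z a / β) / Qpart r c w1 w2 β lam z

/-- The dual function `d(λ) = β ∑_z ρ(z) log Q(z,λ) + λ C + (β/2) λ²`. -/
noncomputable def dualFun {Z : Type*} [Fintype Z] (ρ : Z → ℝ)
    (r c : Z → Bool → ℝ) (w1 w2 : Z → ℝ) (β C lam : ℝ) : ℝ :=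
  β * ∑ z, ρ z * Real.log (Qpart r c w1 w2 β lam z) + lam * C + β * lam ^ 2 / 2

/-- KL divergence between two pmfs on `{0,1}` (with positive second argument):
`KL(p‖q) = ∑_a p(a) log(p(a)/q(a))`. -/
noncomputable def klBool (p q : Bool → ℝ) : ℝ :=
  ∑ a, p a * Real.log (p a / q a)

/-! The dual `d` satisfies `d'(λ) = C + βλ − ∑ ρ E_{π_λ}[w2 c]` and
`d''(λ) = β + ∑ ρ Var_{π_λ}(w2 c) / β ∈ [m, L]` with `m = β`, `L = β + M²K²/β`, so RACER is
projected gradient descent on a strongly convex, smooth function with the classical step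
`η = 2/(m + L)`. The projected step `λ ↦ max 0 (λ − η d'(λ))` therefore contracts with factor
`(L − m)/(L + m) = M²K²/(M²K² + 2β²)`, and `λ*` is its fixed point by first-order optimality.
On the primal side, `KL(π_λ ‖ π_μ)` is the Bregman divergence of `log Q(z, ·)`, whose second
derivative `Var_{π_λ}(w2 c)/β²` is at most `M²K²/β²`; hence `KL ≤ M²K²/(2β²) (λ − μ)²`. -/

theorem ConvexOn.add_mul_sub_le_of_hasDerivAt {g : ℝ → ℝ} {g' x : ℝ}
    (hg : ConvexOn ℝ Set.univ g) (hd : HasDerivAt g g' x) (y : ℝ) :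
    g x + g' * (y - x) ≤ g y := by
  rcases lt_trichotomy x y with hxy | rfl | hyx
  · have := hg.le_slope_of_hasDerivAt (Set.mem_univ x) (Set.mem_univ y) hxy hd
    rw [slope_def_field, le_div_iff₀ (sub_pos.2 hxy)] at this
    linarith
  · simp
  · have := hg.slope_le_of_hasDerivAt (Set.mem_univ y) (Set.mem_univ x) hyx hd
    rw [slope_def_field, div_le_iff₀ (sub_pos.2 hyx)] at this
    linarith

theorem sub_sub_mul_le_of_hasDerivAt_of_le {f f' f'' : ℝ → ℝ} {S : ℝ}
    (hf : ∀ x, HasDerivAt f (f' x) x) (hf' : ∀ x, HasDerivAt f' (f'' x) x)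
    (hS : ∀ x, f'' x ≤ S) (a b : ℝ) :
    f b - f a - f' a * (b - a) ≤ S / 2 * (b - a) ^ 2 := by
  have hg : ∀ x, HasDerivAt (fun t => S / 2 * t ^ 2 - f t) (S * x - f' x) x := fun x => by
    refine (((hasDerivAt_pow 2 x).const_mul (S / 2)).sub (hf x)).congr_deriv ?_
    ring
  have hg' : ∀ x, HasDerivAt (fun t => S * t - f' t) (S - f'' x) x := fun x =>
    (((hasDerivAt_id x).const_mul S).sub (hf' x)).congr_deriv (by rw [mul_one])
  have hconvex : ConvexOn ℝ Set.univ (fun t => S / 2 * t ^ 2 - f t) := by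
    refine convexOn_of_hasDerivWithinAt2_nonneg convex_univ
      (fun x _ => (hg x).continuousAt.continuousWithinAt)
      (fun x _ => (hg x).hasDerivWithinAt) (fun x _ => (hg' x).hasDerivWithinAt) ?_
    exact fun x _ => sub_nonneg.2 (hS x)
  have := hconvex.add_mul_sub_le_of_hasDerivAt (hg a) b
  linarith

theorem abs_step_sub_step_le_of_deriv_mem_Icc {φ φ' : ℝ → ℝ} {m L : ℝ}
    (hφ : ∀ x, HasDerivAt φ (φ' x) x) (hm : ∀ x, m ≤ φ' x) (hL : ∀ x, φ' x ≤ L)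
    (hmL : 0 < m + L) (x y : ℝ) :
    |(x - 2 / (m + L) * φ x) - (y - 2 / (m + L) * φ y)| ≤ (L - m) / (m + L) * |x - y| := by
  have hT : ∀ t, HasDerivAt (fun t => t - 2 / (m + L) * φ t) (1 - 2 / (m + L) * φ' t) t :=
    fun t => (hasDerivAt_id t).sub ((hφ t).const_mul _)
  have hbound : ∀ t, ‖1 - 2 / (m + L) * φ' t‖ ≤ (L - m) / (m + L) := fun t => by
    have := hmL.ne'
    have e1 : 1 - 2 / (m + L) * φ' t = 2 * (L - φ' t) / (m + L) - (L - m) / (m + L) := by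
      field_simp; ring
    have e2 : 1 - 2 / (m + L) * φ' t = (L - m) / (m + L) - 2 * (φ' t - m) / (m + L) := by
      field_simp; ring
    have h1 : 0 ≤ 2 * (L - φ' t) / (m + L) := by have := hL t; positivity
    have h2 : 0 ≤ 2 * (φ' t - m) / (m + L) := by have := hm t; positivity
    rw [Real.norm_eq_abs, abs_le]
    constructor <;> linarith
  simpa [Real.norm_eq_abs] using convex_univ.norm_image_sub_le_of_norm_hasDerivWithin_le
    (fun t _ => (hT t).hasDerivWithinAt) (fun t _ => hbound t) (Set.mem_univ y) (Set.mem_univ x)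

theorem max_zero_sub_mul_eq_self_of_isMinOn {f : ℝ → ℝ} {x f' η : ℝ}
    (hmin : IsMinOn f (Set.Ici 0) x) (hx : 0 ≤ x) (hf : HasDerivAt f f' x) (hη : 0 ≤ η) :
    max 0 (x - η * f') = x := by
  rcases hx.eq_or_lt with rfl | hpos
  · have hcone : (1 : ℝ) ∈ posTangentConeAt (Set.Ici 0) (0 : ℝ) :=
      mem_posTangentConeAt_of_segment_subset (by simp [segment_eq_Icc, Set.Icc_subset_Ici_self])
    have hf'0 : 0 ≤ f' := by
      simpa using
        hmin.localize.hasFDerivWithinAt_nonneg hf.hasDerivWithinAt.hasFDerivWithinAt hcone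
    simp [mul_nonneg hη hf'0]
  · have : f' = 0 := (hmin.isLocalMin (Ici_mem_nhds hpos)).hasDerivAt_eq_zero hf
    simp [this, hpos.le]

theorem abs_max_zero_sub_max_zero_le (a b : ℝ) : |max 0 a - max 0 b| ≤ |a - b| := by
  rw [max_comm 0 a, max_comm 0 b]
  exact abs_max_sub_max_le_abs a b 0

theorem abs_sub_le_pow_mul_of_lipschitz {x : ℕ → ℝ} {T : ℝ → ℝ} {q xs : ℝ} (hq : 0 ≤ q)
    (hT : ∀ u v, |T u - T v| ≤ q * |u - v|) (hfix : T xs = xs)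
    (hx : ∀ t, x (t + 1) = T (x t)) (t : ℕ) :
    |x t - xs| ≤ q ^ t * |x 0 - xs| := by
  induction t with
  | zero => simp
  | succ n ih =>
    calc |x (n + 1) - xs| = |T (x n) - T xs| := by rw [hx, hfix]
      _ ≤ q * |x n - xs| := hT _ _
      _ ≤ q * (q ^ n * |x 0 - xs|) := by gcongr
      _ = q ^ (n + 1) * |x 0 - xs| := by ring

theorem hasDerivAt_exp_sub_mul_div (x y β t : ℝ) :
    HasDerivAt (fun t => Real.exp ((x - t * y) / β))
      (Real.exp ((x - t * y) / β) * (-y / β)) t := by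
  refine HasDerivAt.exp ?_
  simpa using (((hasDerivAt_id t).mul_const y).const_sub x).div_const β

namespace GibbsFamily

variable {α : Type*} [Fintype α] (s u : α → ℝ) (β : ℝ)

noncomputable def partition (t : ℝ) : ℝ := ∑ a, Real.exp ((s a - t * u a) / β)

noncomputable def prob (t : ℝ) (a : α) : ℝ := Real.exp ((s a - t * u a) / β) / partition s u β t

noncomputable def mean (t : ℝ) : ℝ := ∑ a, prob s u β t a * u a

noncomputable def variance (t : ℝ) : ℝ := ∑ a, prob s u β t a * (u a - mean s u β t) ^ 2

variable {s u β}

theorem partition_pos [Nonempty α] (t : ℝ) : 0 < partition s u β t :=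
  sum_pos (fun _ _ => Real.exp_pos _) univ_nonempty

theorem prob_pos [Nonempty α] (t : ℝ) (a : α) : 0 < prob s u β t a :=
  div_pos (Real.exp_pos _) (partition_pos t)

theorem sum_prob [Nonempty α] (t : ℝ) : ∑ a, prob s u β t a = 1 := by
  unfold prob
  rw [← sum_div]
  exact div_self (partition_pos t).ne'

theorem log_prob [Nonempty α] (t : ℝ) (a : α) :
    Real.log (prob s u β t a) = (s a - t * u a) / β - Real.log (partition s u β t) := by
  rw [prob, Real.log_div (Real.exp_pos _).ne' (partition_pos t).ne', Real.log_exp]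

theorem variance_eq [Nonempty α] (t : ℝ) :
    variance s u β t = ∑ a, prob s u β t a * u a ^ 2 - mean s u β t ^ 2 := by
  have hexpand : ∀ a, prob s u β t a * (u a - mean s u β t) ^ 2
      = prob s u β t a * u a ^ 2 - 2 * mean s u β t * (prob s u β t a * u a)
        + mean s u β t ^ 2 * prob s u β t a := fun a => by ring
  have hmean : ∑ a, prob s u β t a * u a = mean s u β t := rfl
  simp only [variance, hexpand, sum_add_distrib, sum_sub_distrib, ← mul_sum, sum_prob, hmean]
  ring

theorem variance_nonneg [Nonempty α] (t : ℝ) : 0 ≤ variance s u β t :=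
  sum_nonneg fun a _ => mul_nonneg (prob_pos t a).le (sq_nonneg _)

theorem variance_le_sq [Nonempty α] {B : ℝ} (hu : ∀ a, |u a| ≤ B) (t : ℝ) :
    variance s u β t ≤ B ^ 2 := by
  have hsq : ∀ a, prob s u β t a * u a ^ 2 ≤ prob s u β t a * B ^ 2 := fun a =>
    mul_le_mul_of_nonneg_left (sq_le_sq' (abs_le.1 (hu a)).1 (abs_le.1 (hu a)).2) (prob_pos t a).le
  calc variance s u β t ≤ ∑ a, prob s u β t a * u a ^ 2 := by
        rw [variance_eq]; linarith [sq_nonneg (mean s u β t)]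
    _ ≤ ∑ a, prob s u β t a * B ^ 2 := sum_le_sum fun a _ => hsq a
    _ = B ^ 2 := by rw [← sum_mul, sum_prob, one_mul]

theorem hasDerivAt_partition [Nonempty α] (t : ℝ) :
    HasDerivAt (partition s u β) (-(partition s u β t * mean s u β t) / β) t := by
  have hZ := (partition_pos (s := s) (u := u) (β := β) t).ne'
  refine (HasDerivAt.fun_sum fun a _ => hasDerivAt_exp_sub_mul_div (s a) (u a) β t).congr_deriv ?_
  simp only [mean, prob, mul_sum, neg_div, sum_div, ← sum_neg_distrib]
  refine sum_congr rfl fun a _ => ?_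
  field_simp

theorem hasDerivAt_log_partition [Nonempty α] (t : ℝ) :
    HasDerivAt (fun t => Real.log (partition s u β t)) (-mean s u β t / β) t := by
  have hZ := (partition_pos (s := s) (u := u) (β := β) t).ne'
  refine ((hasDerivAt_partition t).log hZ).congr_deriv ?_
  field_simp

theorem hasDerivAt_prob [Nonempty α] (t : ℝ) (a : α) :
    HasDerivAt (fun t => prob s u β t a) (prob s u β t a * (mean s u β t - u a) / β) t := by
  have hZ := (partition_pos (s := s) (u := u) (β := β) t).ne'
  refine ((hasDerivAt_exp_sub_mul_div (s a) (u a) β t).div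
    (hasDerivAt_partition t) hZ).congr_deriv ?_
  simp only [prob]
  field_simp
  ring

theorem hasDerivAt_mean [Nonempty α] (t : ℝ) :
    HasDerivAt (mean s u β) (-variance s u β t / β) t := by
  refine (HasDerivAt.fun_sum fun a _ => (hasDerivAt_prob t a).mul_const (u a)).congr_deriv ?_
  have hmean : ∑ a, prob s u β t a * u a = mean s u β t := rfl
  have hterm : ∀ a, prob s u β t a * (mean s u β t - u a) / β * u a
      = (mean s u β t * (prob s u β t a * u a) - prob s u β t a * u a ^ 2) / β := fun a => by ring
  simp only [hterm, ← sum_div, sum_sub_distrib, ← mul_sum, hmean, variance_eq]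
  ring

theorem sum_prob_mul_log_div [Nonempty α] (t t' : ℝ) :
    ∑ a, prob s u β t a * Real.log (prob s u β t a / prob s u β t' a)
      = Real.log (partition s u β t') - Real.log (partition s u β t)
        + (t' - t) * mean s u β t / β := by
  have hterm : ∀ a, prob s u β t a * Real.log (prob s u β t a / prob s u β t' a)
      = (Real.log (partition s u β t') - Real.log (partition s u β t)) * prob s u β t a
        + (t' - t) / β * (prob s u β t a * u a) := fun a => by
    rw [Real.log_div (prob_pos t a).ne' (prob_pos t' a).ne', log_prob, log_prob]
    ring
  simp only [hterm, sum_add_distrib, ← mul_sum, sum_prob]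
  rw [mean]
  ring

theorem sum_prob_mul_log_div_le [Nonempty α] {B : ℝ} (hu : ∀ a, |u a| ≤ B) (t t' : ℝ) :
    ∑ a, prob s u β t a * Real.log (prob s u β t a / prob s u β t' a)
      ≤ B ^ 2 / β ^ 2 / 2 * (t' - t) ^ 2 := by
  have hf' : ∀ x, HasDerivAt (fun t => -mean s u β t / β) (variance s u β x / β ^ 2) x :=
    fun x => by
    refine ((hasDerivAt_mean x).neg.div_const β).congr_deriv ?_
    ring
  have h := sub_sub_mul_le_of_hasDerivAt_of_le hasDerivAt_log_partition hf'
    (fun x => div_le_div_of_nonneg_right (variance_le_sq hu x) (sq_nonneg β)) t t'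
  rw [sum_prob_mul_log_div]
  convert h using 1
  ring

end GibbsFamily

section Racer

variable {Z : Type*} (ρ : Z → ℝ) (r c : Z → Bool → ℝ) (w1 w2 : Z → ℝ) (β C : ℝ)

theorem gibbs_eq_prob (lam : ℝ) (z : Z) :
    gibbs r c w1 w2 β lam z
      = GibbsFamily.prob (fun a => w1 z * r z a) (fun a => w2 z * c z a) β lam := rfl

theorem abs_w2_mul_c_le {M K : ℝ} {z : Z} (hw2 : 0 ≤ w2 z) (hw2K : w2 z ≤ K)
    (hc : ∀ a, 0 ≤ c z a ∧ c z a ≤ M) (a : Bool) : |w2 z * c z a| ≤ K * M := by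
  rw [abs_of_nonneg (mul_nonneg hw2 (hc a).1)]
  exact mul_le_mul hw2K (hc a).2 (hc a).1 (hw2.trans hw2K)

theorem klBool_gibbs_le {M K : ℝ} {z : Z} (hw2 : 0 ≤ w2 z) (hw2K : w2 z ≤ K)
    (hc : ∀ a, 0 ≤ c z a ∧ c z a ≤ M) (lam mu : ℝ) :
    klBool (gibbs r c w1 w2 β lam z) (gibbs r c w1 w2 β mu z)
      ≤ M ^ 2 * K ^ 2 / (2 * β ^ 2) * (lam - mu) ^ 2 := by
  have h := GibbsFamily.sum_prob_mul_log_div_le (s := fun a => w1 z * r z a) (β := β)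
    (abs_w2_mul_c_le c w2 hw2 hw2K hc) lam mu
  rw [klBool, gibbs_eq_prob, gibbs_eq_prob]
  convert h using 1
  ring

noncomputable def dualDeriv [Fintype Z] (lam : ℝ) : ℝ :=
  C + β * lam - ∑ z, ρ z * ∑ a, gibbs r c w1 w2 β lam z a * (w2 z * c z a)

theorem hasDerivAt_dualFun [Fintype Z] (hβ : β ≠ 0) (lam : ℝ) :
    HasDerivAt (dualFun ρ r c w1 w2 β C) (dualDeriv ρ r c w1 w2 β C lam) lam := by
  have hlogQ := HasDerivAt.fun_sum fun z (_ : z ∈ univ) =>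
    (GibbsFamily.hasDerivAt_log_partition (s := fun a => w1 z * r z a)
      (u := fun a => w2 z * c z a) (β := β) lam).const_mul (ρ z)
  refine (((hlogQ.const_mul β).add ((hasDerivAt_id lam).mul_const C)).add
    (((hasDerivAt_pow 2 lam).const_mul β).div_const 2)).congr_deriv ?_
  have hmean : ∀ z, ∑ a, gibbs r c w1 w2 β lam z a * (w2 z * c z a)
      = GibbsFamily.mean (fun a => w1 z * r z a) (fun a => w2 z * c z a) β lam := fun z => rfl
  simp only [dualDeriv, hmean, mul_sum]
  field_simp
  rw [sum_neg_distrib]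
  ring

theorem hasDerivAt_dualDeriv [Fintype Z] (lam : ℝ) :
    HasDerivAt (dualDeriv ρ r c w1 w2 β C)
      (β + (∑ z, ρ z * GibbsFamily.variance (fun a => w1 z * r z a)
        (fun a => w2 z * c z a) β lam) / β) lam := by
  have hmean := HasDerivAt.fun_sum fun z (_ : z ∈ univ) =>
    (GibbsFamily.hasDerivAt_mean (s := fun a => w1 z * r z a)
      (u := fun a => w2 z * c z a) (β := β) lam).const_mul (ρ z)
  refine ((((hasDerivAt_id lam).const_mul β).const_add C).sub hmean).congr_deriv ?_
  simp only [sum_div, neg_div, mul_neg, sum_neg_distrib, sub_neg_eq_add, mul_one, mul_div_assoc]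

theorem sum_mul_variance_mem_Icc [Fintype Z] {M K : ℝ} (hρ : ∀ z, 0 ≤ ρ z)
    (hρ_sum : ∑ z, ρ z = 1) (hw2 : ∀ z, 0 ≤ w2 z) (hw2K : ∀ z, w2 z ≤ K)
    (hc : ∀ z a, 0 ≤ c z a ∧ c z a ≤ M) (lam : ℝ) :
    ∑ z, ρ z * GibbsFamily.variance (fun a => w1 z * r z a) (fun a => w2 z * c z a) β lam
      ∈ Set.Icc 0 (M ^ 2 * K ^ 2) := by
  constructor
  · exact sum_nonneg fun z _ => mul_nonneg (hρ z) (GibbsFamily.variance_nonneg lam)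
  · calc _ ≤ ∑ z, ρ z * (K * M) ^ 2 := sum_le_sum fun z _ => mul_le_mul_of_nonneg_left
          (GibbsFamily.variance_le_sq (abs_w2_mul_c_le c w2 (hw2 z) (hw2K z) (hc z)) lam) (hρ z)
      _ = M ^ 2 * K ^ 2 := by rw [← sum_mul, hρ_sum]; ring

theorem sum_klBool_gibbs_le [Fintype Z] {M K : ℝ} (hρ : ∀ z, 0 ≤ ρ z)
    (hρ_sum : ∑ z, ρ z = 1) (hw2 : ∀ z, 0 ≤ w2 z) (hw2K : ∀ z, w2 z ≤ K)
    (hc : ∀ z a, 0 ≤ c z a ∧ c z a ≤ M) (lam mu : ℝ) :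
    ∑ z, ρ z * klBool (gibbs r c w1 w2 β lam z) (gibbs r c w1 w2 β mu z)
      ≤ M ^ 2 * K ^ 2 / (2 * β ^ 2) * (lam - mu) ^ 2 :=
  calc _ ≤ ∑ z, ρ z * (M ^ 2 * K ^ 2 / (2 * β ^ 2) * (lam - mu) ^ 2) :=
        sum_le_sum fun z _ => mul_le_mul_of_nonneg_left
          (klBool_gibbs_le r c w1 w2 β (hw2 z) (hw2K z) (hc z) lam mu) (hρ z)
    _ = M ^ 2 * K ^ 2 / (2 * β ^ 2) * (lam - mu) ^ 2 := by rw [← sum_mul, hρ_sum, one_mul]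

theorem abs_dual_step_sub_dual_step_le [Fintype Z] {M K : ℝ} (hρ : ∀ z, 0 ≤ ρ z)
    (hρ_sum : ∑ z, ρ z = 1) (hw2 : ∀ z, 0 ≤ w2 z) (hw2K : ∀ z, w2 z ≤ K)
    (hc : ∀ z a, 0 ≤ c z a ∧ c z a ≤ M) (hβ : 0 < β) (x y : ℝ) :
    |(x - 2 * β / (M ^ 2 * K ^ 2 + 2 * β ^ 2) * dualDeriv ρ r c w1 w2 β C x)
        - (y - 2 * β / (M ^ 2 * K ^ 2 + 2 * β ^ 2) * dualDeriv ρ r c w1 w2 β C y)|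
      ≤ M ^ 2 * K ^ 2 / (M ^ 2 * K ^ 2 + 2 * β ^ 2) * |x - y| := by
  have hvar := sum_mul_variance_mem_Icc ρ r c w1 w2 β hρ hρ_sum hw2 hw2K hc
  have h := abs_step_sub_step_le_of_deriv_mem_Icc (hasDerivAt_dualDeriv ρ r c w1 w2 β C)
    (fun x => le_add_of_nonneg_right (div_nonneg (hvar x).1 hβ.le))
    (fun x => add_le_add_right (div_le_div_of_nonneg_right (hvar x).2 hβ.le) β)
    (by positivity) x y
  have hstep : 2 / (β + (β + M ^ 2 * K ^ 2 / β)) = 2 * β / (M ^ 2 * K ^ 2 + 2 * β ^ 2) := by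
    field_simp; ring
  have hrate : (β + M ^ 2 * K ^ 2 / β - β) / (β + (β + M ^ 2 * K ^ 2 / β))
      = M ^ 2 * K ^ 2 / (M ^ 2 * K ^ 2 + 2 * β ^ 2) := by
    field_simp; ring
  rwa [hstep, hrate] at h

end Racer

theorem racer_linear_convergence_general {Z : Type*} [Fintype Z]
    (ρ : Z → ℝ) (hρ_pos : ∀ z, 0 < ρ z) (hρ_sum : ∑ z, ρ z = 1)
    (r c : Z → Bool → ℝ) (w1 w2 : Z → ℝ)
    (hw2 : ∀ z, 0 ≤ w2 z)
    (β : ℝ) (hβ : 0 < β) (C : ℝ)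
    (M K : ℝ)
    (hc_bound : ∀ z a, 0 ≤ c z a ∧ c z a ≤ M)
    (hw2_bound : ∀ z, w2 z ≤ K)
    (lamstar : ℝ) (hlamstar_mem : lamstar ∈ Set.Ici (0 : ℝ))
    (hlamstar_min : ∀ lam ∈ Set.Ici (0 : ℝ),
      dualFun ρ r c w1 w2 β C lamstar ≤ dualFun ρ r c w1 w2 β C lam)
    (lamseq : ℕ → ℝ)
    (hstep : ∀ t : ℕ, lamseq (t + 1)
      = max 0 (lamseq t + 2 * β / (M ^ 2 * K ^ 2 + 2 * β ^ 2) *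
          ((∑ z, ρ z * ∑ a, gibbs r c w1 w2 β (lamseq t) z a * (w2 z * c z a))
            - C - β * lamseq t))) :
    ∀ t : ℕ,
      ∑ z, ρ z * klBool (gibbs r c w1 w2 β (lamseq t) z)
          (gibbs r c w1 w2 β lamstar z)
        ≤ M ^ 2 * K ^ 2 / (2 * β ^ 2)
          * (M ^ 2 * K ^ 2 / (M ^ 2 * K ^ 2 + 2 * β ^ 2)) ^ (2 * t)
          * (lamseq 0 - lamstar) ^ 2 := by
  set η := 2 * β / (M ^ 2 * K ^ 2 + 2 * β ^ 2)
  set q := M ^ 2 * K ^ 2 / (M ^ 2 * K ^ 2 + 2 * β ^ 2)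
  set φ := dualDeriv ρ r c w1 w2 β C
  have hρ : ∀ z, 0 ≤ ρ z := fun z => (hρ_pos z).le
  have hcontract : ∀ x y, |max 0 (x - η * φ x) - max 0 (y - η * φ y)| ≤ q * |x - y| :=
    fun x y => (abs_max_zero_sub_max_zero_le _ _).trans
      (abs_dual_step_sub_dual_step_le ρ r c w1 w2 β C hρ hρ_sum hw2 hw2_bound hc_bound hβ x y)
  have hfix : max 0 (lamstar - η * φ lamstar) = lamstar :=
    max_zero_sub_mul_eq_self_of_isMinOn hlamstar_min hlamstar_mem
      (hasDerivAt_dualFun ρ r c w1 w2 β C hβ.ne' lamstar) (by positivity)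
  have hiter : ∀ t, lamseq (t + 1) = max 0 (lamseq t - η * φ (lamseq t)) := fun t => by
    rw [hstep t]; simp only [φ, dualDeriv]; ring_nf
  intro t
  calc _ ≤ M ^ 2 * K ^ 2 / (2 * β ^ 2) * |lamseq t - lamstar| ^ 2 := by
        rw [sq_abs]
        exact sum_klBool_gibbs_le ρ r c w1 w2 β hρ hρ_sum hw2 hw2_bound hc_bound _ _
    _ ≤ M ^ 2 * K ^ 2 / (2 * β ^ 2) * (q ^ t * |lamseq 0 - lamstar|) ^ 2 := by
        gcongr
        exact abs_sub_le_pow_mul_of_lipschitz (by positivity) hcontract hfix hiter t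
    _ = M ^ 2 * K ^ 2 / (2 * β ^ 2) * q ^ (2 * t) * (lamseq 0 - lamstar) ^ 2 := by
        rw [mul_pow, sq_abs, pow_mul']; ring

/-- linear convergence of RACER: if `λ*` is the unique
minimizer of the dual function `d` over `[0,∞)`, `π* = π_{λ*}`, and the
primal–dual iterates are `λ_{t+1} = max(0, λ_t + η (∑_z ρ(z) ∑_a π_{λ_t}(a|z)
w2(z) c(z,a) − C − β λ_t))` with `η = 2β/(M²K² + 2β²)` and `π_t = π_{λ_t}`,
then `∑_z ρ(z) KL(π_t(·|z) ‖ π*(·|z)) ≤ (M²K²/(2β²)) ·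
(M²K²/(M²K² + 2β²))^{2t} · (λ₀ − λ*)²`. -/
theorem racer_linear_convergence {Z : Type*} [Fintype Z] [Nonempty Z]
    (ρ : Z → ℝ) (hρ_pos : ∀ z, 0 < ρ z) (hρ_sum : ∑ z, ρ z = 1)
    (r c : Z → Bool → ℝ) (w1 w2 : Z → ℝ)
    (hw1 : ∀ z, 0 ≤ w1 z) (hw2 : ∀ z, 0 ≤ w2 z)
    (β : ℝ) (hβ : 0 < β) (C : ℝ)
    (M K : ℝ) (hM : 0 < M) (hK : 0 < K)
    (hc_bound : ∀ z a, 0 ≤ c z a ∧ c z a ≤ M)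
    (hw2_bound : ∀ z, w2 z ≤ K)
    (lamstar : ℝ) (hlamstar_mem : lamstar ∈ Set.Ici (0 : ℝ))
    (hlamstar_min : ∀ lam ∈ Set.Ici (0 : ℝ),
      dualFun ρ r c w1 w2 β C lamstar ≤ dualFun ρ r c w1 w2 β C lam)
    (hlamstar_unique : ∀ lam' ∈ Set.Ici (0 : ℝ),
      (∀ lam ∈ Set.Ici (0 : ℝ),
        dualFun ρ r c w1 w2 β C lam' ≤ dualFun ρ r c w1 w2 β C lam) →
      lam' = lamstar)
    (lamseq : ℕ → ℝ) (hlam0 : 0 ≤ lamseq 0)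
    (hstep : ∀ t : ℕ, lamseq (t + 1)
      = max 0 (lamseq t + 2 * β / (M ^ 2 * K ^ 2 + 2 * β ^ 2) *
          ((∑ z, ρ z * ∑ a, gibbs r c w1 w2 β (lamseq t) z a * (w2 z * c z a))
            - C - β * lamseq t))) :
    ∀ t : ℕ,
      ∑ z, ρ z * klBool (gibbs r c w1 w2 β (lamseq t) z)
          (gibbs r c w1 w2 β lamstar z)
        ≤ M ^ 2 * K ^ 2 / (2 * β ^ 2)
          * (M ^ 2 * K ^ 2 / (M ^ 2 * K ^ 2 + 2 * β ^ 2)) ^ (2 * t)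
          * (lamseq 0 - lamstar) ^ 2 :=
  racer_linear_convergence_general ρ hρ_pos hρ_sum r c w1 w2 hw2 β hβ C M K hc_bound hw2_bound
    lamstar hlamstar_mem hlamstar_min lamseq hstep
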